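/- Let K be a group acting on a set X and θ : K → G a group homomorphism such that every non-identity element of F = ker θ acts on X without fixed points. Let κ, κ' be non-trivial elements of K of finite order with θ(κ) = θ(κ'), Fix(κ) ≠ ∅ and Fix(κ') ≠ ∅. Then F·Fix(κ) = F·Fix(κ') if and only if there exists γ ∈ F with κ' = γκγ⁻¹. -/

import Mathlib

/-! Under a free action of `ker θ`, two elements with the same image under `θ` that share a
fixed point coincide. So if a fixed point of `κ` lies in `γ • Fix κ'` with `γ ∈ ker θ`, it is
fixed by `γ κ' γ⁻¹` as well, whence `κ = γ κ' γ⁻¹`. Conversely `Fix (γ κ γ⁻¹) = γ • Fix κ`, which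
has the same `ker θ`-saturation as `Fix κ`. -/

/-- The `ker θ`-saturation of the fixed-point set of `κ` in `X`. -/
def kerSaturatedFix {K G : Type*} (X : Type*) [Group K] [Group G] [MulAction K X]
    (θ : K →* G) (κ : K) : Set X :=
  {x : X | ∃ γ ∈ θ.ker, ∃ y : X, κ • y = y ∧ γ • y = x}

section

variable {K G X : Type*} [Group K] [Group G] [MulAction K X] {θ : K →* G}

theorem mem_kerSaturatedFix_of_smul_eq {κ : K} {x : X} (hx : κ • x = x) :
    x ∈ kerSaturatedFix X θ κ :=
  ⟨1, one_mem _, x, hx, one_smul _ _⟩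

theorem smul_eq_of_conj_smul_eq {γ κ : K} {y : X} (hy : κ • y = y) :
    (γ * κ * γ⁻¹) • γ • y = γ • y := by
  rw [mul_smul, mul_smul, inv_smul_smul, hy]

theorem kerSaturatedFix_conj_subset {γ : K} (hγ : γ ∈ θ.ker) (κ : K) :
    kerSaturatedFix X θ κ ⊆ kerSaturatedFix X θ (γ * κ * γ⁻¹) := by
  rintro _ ⟨δ, hδ, y, hy, rfl⟩
  refine ⟨δ * γ⁻¹, mul_mem hδ (inv_mem hγ), γ • y, smul_eq_of_conj_smul_eq hy, ?_⟩
  rw [mul_smul, inv_smul_smul]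

theorem kerSaturatedFix_conj {γ : K} (hγ : γ ∈ θ.ker) (κ : K) :
    kerSaturatedFix X θ (γ * κ * γ⁻¹) = kerSaturatedFix X θ κ := by
  refine (Set.Subset.antisymm (kerSaturatedFix_conj_subset hγ κ) ?_).symm
  simpa only [inv_inv, mul_assoc, inv_mul_cancel, mul_one, inv_mul_cancel_left] using
    kerSaturatedFix_conj_subset (inv_mem hγ) (γ * κ * γ⁻¹)

theorem eq_of_map_eq_of_smul_eq (hfree : ∀ f : K, f ∈ θ.ker → f ≠ 1 → ∀ x : X, f • x ≠ x)
    {κ κ' : K} (hθ : θ κ = θ κ') {x : X} (hx : κ • x = x) (hx' : κ' • x = x) : κ = κ' := by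
  have hker : κ⁻¹ * κ' ∈ θ.ker := by
    rw [MonoidHom.mem_ker, map_mul, map_inv, hθ, inv_mul_cancel]
  have hfix : (κ⁻¹ * κ') • x = x := by
    rw [mul_smul, hx', inv_smul_eq_iff, hx]
  by_contra hne
  exact hfree _ hker (by rwa [ne_eq, inv_mul_eq_one]) x hfix

theorem exists_conj_of_smul_eq_of_mem_kerSaturatedFix
    (hfree : ∀ f : K, f ∈ θ.ker → f ≠ 1 → ∀ x : X, f • x ≠ x)
    {κ κ' : K} (hθ : θ κ = θ κ') {x : X} (hx : κ • x = x)
    (hmem : x ∈ kerSaturatedFix X θ κ') : ∃ γ ∈ θ.ker, κ = γ * κ' * γ⁻¹ := by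
  obtain ⟨γ, hγ, y, hy, rfl⟩ := hmem
  refine ⟨γ, hγ, eq_of_map_eq_of_smul_eq hfree ?_ hx (smul_eq_of_conj_smul_eq hy)⟩
  rw [hθ, map_mul, map_mul, map_inv, show θ γ = 1 from hγ, one_mul, inv_one, mul_one]

end

theorem kerSaturatedFix_eq_iff_conj_general
    {K G X : Type*} [Group K] [Group G] [MulAction K X]
    (θ : K →* G)
    (hfree : ∀ f : K, f ∈ θ.ker → f ≠ 1 → ∀ x : X, f • x ≠ x)
    (κ κ' : K)
    (hθ : θ κ = θ κ')
    (hfix : ∃ x : X, κ • x = x) :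
    kerSaturatedFix X θ κ = kerSaturatedFix X θ κ' ↔
      ∃ γ ∈ θ.ker, κ' = γ * κ * γ⁻¹ := by
  constructor
  · intro h
    obtain ⟨x, hx⟩ := hfix
    have hmem : x ∈ kerSaturatedFix X θ κ' := h ▸ mem_kerSaturatedFix_of_smul_eq hx
    obtain ⟨γ, hγ, hconj⟩ := exists_conj_of_smul_eq_of_mem_kerSaturatedFix hfree hθ hx hmem
    exact ⟨γ⁻¹, inv_mem hγ, by rw [hconj]; group⟩
  · rintro ⟨γ, hγ, rfl⟩
    exact (kerSaturatedFix_conj hγ κ).symm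

/-- if `F = ker θ` acts freely on `X`, and `κ, κ'` are non-trivial
finite-order elements with the same `θ`-image and non-empty fixed-point sets, then
`F ⬝ Fix κ = F ⬝ Fix κ'` iff `κ'` is conjugate to `κ` by an element of `F`. -/
theorem kerSaturatedFix_eq_iff_conj
    {K G X : Type*} [Group K] [Group G] [MulAction K X]
    (θ : K →* G)
    (hfree : ∀ f : K, f ∈ θ.ker → f ≠ 1 → ∀ x : X, f • x ≠ x)
    (κ κ' : K) (hκ : κ ≠ 1) (hκ' : κ' ≠ 1)
    (hfin : IsOfFinOrder κ) (hfin' : IsOfFinOrder κ')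
    (hθ : θ κ = θ κ')
    (hfix : ∃ x : X, κ • x = x) (hfix' : ∃ x : X, κ' • x = x) :
    kerSaturatedFix X θ κ = kerSaturatedFix X θ κ' ↔
      ∃ γ ∈ θ.ker, κ' = γ * κ * γ⁻¹ :=
  kerSaturatedFix_eq_iff_conj_general θ hfree κ κ' hθ hfix
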